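/- arXiv:1410.0405 — 6 statements merged into one kernel-verified Lean document; each statement's English description precedes it below -/
import Mathlib

section
/- Let Ω ⊂ ℝⁿ be a compact set, let f : ℝⁿ → ℝⁿ, q : ℝⁿ → ℝ, and Σ : ℝⁿ → ℝ^{n×n} be functions such that q(x) > 0 for all x ∈ Ω and Σ(x) is a symmetric positive semidefinite matrix for all x ∈ Ω, and let λ > 0. Define the operator L(Ψ)(x) = f(x)ᵀ∇Ψ(x) + (1/2)Tr(∇²Ψ(x)Σ(x)). Suppose Ψ* and Ψ_l are twice continuously differentiable on anuintl open set containing Ω, that (1/λ)q(x)Ψ*(x) − L(Ψ*)(x) = 0 for all x in the interior of Ω, that (1/λ)q(x)Ψ_l(x) − L(Ψ_l)(x) ≤ 0 for all x in the interior of Ω, and that Ψ_l(x) ≤ Ψ*(x) for all x on the boundary ∂Ω. Then Ψ_l(x) ≤ Ψ*(x) for all x ∈ Ω. (Theorem 4, classical-solution version: a subsolution of the relaxed linear HJB PDE is a pointwise lower bound of the exact solution.) -/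
open Matrix

/-- Gradient of a scalar function on `ℝⁿ`, as a vector of directional derivatives. -/
noncomputable def grad {n : ℕ} (Ψ : (Fin n → ℝ) → ℝ) (x : Fin n → ℝ) : Fin n → ℝ :=
  fun i => fderiv ℝ Ψ x (Pi.single i 1)

/-- Hessian matrix of a scalar function on `ℝⁿ`. -/
noncomputable def hess {n : ℕ} (Ψ : (Fin n → ℝ) → ℝ) (x : Fin n → ℝ) :
    Matrix (Fin n) (Fin n) ℝ :=
  Matrix.of fun i j => fderiv ℝ (fun y => fderiv ℝ Ψ y (Pi.single j 1)) x (Pi.single i 1)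

/-- The linear HJB operator `L(Ψ)(x) = f(x)ᵀ∇Ψ(x) + (1/2) Tr(∇²Ψ(x) Σ(x))`. -/
noncomputable def hjbL {n : ℕ} (f : (Fin n → ℝ) → Fin n → ℝ)
    (Sig : (Fin n → ℝ) → Matrix (Fin n) (Fin n) ℝ)
    (Ψ : (Fin n → ℝ) → ℝ) (x : Fin n → ℝ) : ℝ :=
  f x ⬝ᵥ grad Ψ x + (1 / 2) * (hess Ψ x * Sig x).trace

/-!
Put `u = Ψl - Ψstar`; by linearity of `L`, `(q/λ) u - L u ≤ 0` in the interior of `Ω`.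
On the compact set `Ω`, `u` attains its maximum at some `x₀`. On the frontier `u ≤ 0` is
assumed. At an interior maximum, `∇u(x₀) = 0` and `∇²u(x₀)` is negative semidefinite, so
`Tr(∇²u(x₀) Σ(x₀)) ≤ 0` because `Σ(x₀)` is positive semidefinite; hence `L u(x₀) ≤ 0`,
so `(q/λ) u(x₀) ≤ 0` and `u(x₀) ≤ 0` since `q/λ > 0`.
-/

open Filter Topology

open scoped ComplexOrder in
theorem Matrix.PosSemidef.trace_mul_nonneg {m 𝕜 : Type*} [Fintype m] [RCLike 𝕜]
    {A B : Matrix m m 𝕜} (hA : A.PosSemidef) (hB : B.PosSemidef) : 0 ≤ (A * B).trace := by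
  classical
  open scoped MatrixOrder in
  obtain ⟨C, rfl⟩ := CStarAlgebra.nonneg_iff_eq_star_mul_self.mp hB.nonneg
  rw [star_eq_conjTranspose, ← mul_assoc, trace_mul_cycle]
  exact (hA.mul_mul_conjTranspose_same C).trace_nonneg

theorem ContDiffAt.differentiableAt_fderiv {𝕜 E F : Type*} [NontriviallyNormedField 𝕜]
    [NormedAddCommGroup E] [NormedSpace 𝕜 E] [NormedAddCommGroup F] [NormedSpace 𝕜 F]
    {f : E → F} {x : E} (hf : ContDiffAt 𝕜 2 f x) : DifferentiableAt 𝕜 (fderiv 𝕜 f) x :=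
  (hf.fderiv_right (m := 1) le_rfl).differentiableAt one_ne_zero

theorem IsLocalMax.deriv_deriv_nonpos {f : ℝ → ℝ} {a : ℝ} (h : IsLocalMax f a)
    (hf : ContinuousAt f a) : deriv (deriv f) a ≤ 0 := by
  -- Otherwise `a` would also be a local minimum, making `f` locally constant.
  by_contra! hpos
  have hmin : IsLocalMin f a := isLocalMin_of_deriv_deriv_pos hpos h.deriv_eq_zero hf
  have hconst : f =ᶠ[𝓝 a] fun _ => f a :=
    (h.and hmin).mono fun x hx => le_antisymm hx.1 hx.2
  simp [hconst.deriv.deriv_eq] at hpos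

theorem IsLocalMax.fderiv_fderiv_apply_self_nonpos {E : Type*} [NormedAddCommGroup E]
    [NormedSpace ℝ E] {u : E → ℝ} {a : E} (h : IsLocalMax u a) (hu : ContDiffAt ℝ 2 u a)
    (v : E) : fderiv ℝ (fderiv ℝ u) a v v ≤ 0 := by
  set line : ℝ → E := fun t => a + t • v
  have hline : ∀ t, HasDerivAt line v t := fun t => by
    simpa only [id, one_smul] using ((hasDerivAt_id t).smul_const v).const_add a
  have hline0 : line 0 = a := by simp [line]
  have hline_tendsto : Tendsto line (𝓝 0) (𝓝 a) := hline0 ▸ (hline 0).continuousAt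
  have hmax : IsLocalMax (u ∘ line) 0 := by
    rw [← hline0] at h; exact h.comp_continuous (hline 0).continuousAt
  have hderiv : deriv (u ∘ line) =ᶠ[𝓝 0] fun t => fderiv ℝ u (line t) v := by
    have hdiff : ∀ᶠ y in 𝓝 a, DifferentiableAt ℝ u y :=
      (hu.eventually (by simp)).mono fun y hy => hy.differentiableAt two_ne_zero
    filter_upwards [hline_tendsto.eventually hdiff] with t ht
    exact (ht.hasFDerivAt.comp_hasDerivAt t (hline t)).deriv
  have hderiv2 : HasDerivAt (fun t => fderiv ℝ u (line t) v) (fderiv ℝ (fderiv ℝ u) a v v) 0 := by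
    have hdd : DifferentiableAt ℝ (fderiv ℝ u) (line 0) :=
      hline0 ▸ hu.differentiableAt_fderiv
    have := hdd.hasFDerivAt.comp_hasDerivAt 0 (hline 0)
    rw [hline0] at this
    exact (ContinuousLinearMap.apply ℝ ℝ v).hasFDerivAt.comp_hasDerivAt 0 this
  have := hmax.deriv_deriv_nonpos (hu.continuousAt.comp_of_eq (hline 0).continuousAt hline0)
  rwa [hderiv.deriv_eq, hderiv2.deriv] at this

section Hessian

variable {n : ℕ} {Ψ Ψ₁ Ψ₂ : (Fin n → ℝ) → ℝ} {x : Fin n → ℝ}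

theorem hess_apply_of_differentiableAt (h : DifferentiableAt ℝ (fderiv ℝ Ψ) x) (i j : Fin n) :
    hess Ψ x i j = fderiv ℝ (fderiv ℝ Ψ) x (Pi.single i 1) (Pi.single j 1) := by
  simp [hess, fderiv_clm_apply h (differentiableAt_const _)]

theorem dotProduct_hess_mulVec (h : DifferentiableAt ℝ (fderiv ℝ Ψ) x) (v w : Fin n → ℝ) :
    v ⬝ᵥ (hess Ψ x *ᵥ w) = fderiv ℝ (fderiv ℝ Ψ) x v w := by
  set B := fderiv ℝ (fderiv ℝ Ψ) x
  have : hess Ψ x = LinearMap.toMatrix₂' ℝ ((ContinuousLinearMap.coeLM ℝ).comp B.toLinearMap) := by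
    ext i j
    simp [hess_apply_of_differentiableAt h, LinearMap.toMatrix₂'_apply, B]
  rw [this, ← Matrix.toLinearMap₂'_apply', Matrix.toLinearMap₂'_toMatrix']
  rfl

theorem grad_sub (h₁ : DifferentiableAt ℝ Ψ₁ x) (h₂ : DifferentiableAt ℝ Ψ₂ x) :
    grad (Ψ₁ - Ψ₂) x = grad Ψ₁ x - grad Ψ₂ x := by
  ext i
  simp [grad, fderiv_sub h₁ h₂]

theorem hess_sub (h₁ : ContDiffAt ℝ 2 Ψ₁ x) (h₂ : ContDiffAt ℝ 2 Ψ₂ x) :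
    hess (Ψ₁ - Ψ₂) x = hess Ψ₁ x - hess Ψ₂ x := by
  have hd₁ := h₁.differentiableAt_fderiv
  have hd₂ := h₂.differentiableAt_fderiv
  have hfderiv : fderiv ℝ (Ψ₁ - Ψ₂) =ᶠ[𝓝 x] fderiv ℝ Ψ₁ - fderiv ℝ Ψ₂ := by
    filter_upwards [h₁.eventually (by simp), h₂.eventually (by simp)] with y hy₁ hy₂
    exact fderiv_sub (hy₁.differentiableAt two_ne_zero) (hy₂.differentiableAt two_ne_zero)
  have hd : DifferentiableAt ℝ (fderiv ℝ (Ψ₁ - Ψ₂)) x :=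
    (h₁.sub h₂).differentiableAt_fderiv
  ext i j
  rw [Matrix.sub_apply, hess_apply_of_differentiableAt hd, hess_apply_of_differentiableAt hd₁,
    hess_apply_of_differentiableAt hd₂, hfderiv.fderiv_eq, fderiv_sub hd₁ hd₂]
  rfl

theorem hjbL_sub (f : (Fin n → ℝ) → Fin n → ℝ) (Sig : (Fin n → ℝ) → Matrix (Fin n) (Fin n) ℝ)
    (h₁ : ContDiffAt ℝ 2 Ψ₁ x) (h₂ : ContDiffAt ℝ 2 Ψ₂ x) :
    hjbL f Sig (Ψ₁ - Ψ₂) x = hjbL f Sig Ψ₁ x - hjbL f Sig Ψ₂ x := by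
  simp only [hjbL, grad_sub (h₁.differentiableAt two_ne_zero) (h₂.differentiableAt two_ne_zero),
    hess_sub h₁ h₂, Matrix.sub_mul, Matrix.trace_sub, dotProduct_sub]
  ring

theorem IsLocalMax.neg_hess_posSemidef (h : IsLocalMax Ψ x) (hΨ : ContDiffAt ℝ 2 Ψ x) :
    (-hess Ψ x).PosSemidef := by
  have hd := hΨ.differentiableAt_fderiv
  have hsymm := hΨ.isSymmSndFDerivAt (by simp [minSmoothness_of_isRCLikeNormedField])
  refine Matrix.posSemidef_iff_dotProduct_mulVec.mpr ⟨?_, fun v => ?_⟩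
  · ext i j
    simp [hess_apply_of_differentiableAt hd, hsymm.eq (Pi.single i 1)]
  · simpa [Matrix.neg_mulVec, dotProduct_hess_mulVec hd] using
      h.fderiv_fderiv_apply_self_nonpos hΨ v

theorem IsLocalMax.hjbL_nonpos (f : (Fin n → ℝ) → Fin n → ℝ)
    {Sig : (Fin n → ℝ) → Matrix (Fin n) (Fin n) ℝ} (hSig : (Sig x).PosSemidef)
    (h : IsLocalMax Ψ x) (hΨ : ContDiffAt ℝ 2 Ψ x) : hjbL f Sig Ψ x ≤ 0 := by
  have hgrad : grad Ψ x = 0 := by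
    ext i
    simp [grad, h.fderiv_eq_zero]
  have htrace := (h.neg_hess_posSemidef hΨ).trace_mul_nonneg hSig
  rw [Matrix.neg_mul, Matrix.trace_neg, neg_nonneg] at htrace
  simp only [hjbL, hgrad, dotProduct_zero, zero_add]
  linarith

end Hessian

theorem IsCompact.forall_nonpos_of_isMaxOn_interior {E : Type*} [TopologicalSpace E]
    {Ω : Set E} (hΩ : IsCompact Ω) {u : E → ℝ} (hu : ContinuousOn u Ω)
    (hfrontier : ∀ x ∈ frontier Ω, u x ≤ 0)
    (hinterior : ∀ x ∈ interior Ω, IsMaxOn u Ω x → u x ≤ 0) :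
    ∀ x ∈ Ω, u x ≤ 0 := by
  intro x hx
  obtain ⟨x₀, hx₀, hmax⟩ := hΩ.exists_isMaxOn ⟨x, hx⟩ hu
  refine (hmax hx).trans ?_
  by_cases hint : x₀ ∈ interior Ω
  · exact hinterior x₀ hint hmax
  · exact hfrontier x₀ ⟨subset_closure hx₀, hint⟩

/-- Theorem 4 (classical-solution version): a classical subsolution of the relaxed linear
HJB PDE that lies below the exact solution on the boundary is a pointwise lower bound of
the exact solution on all of `Ω`. -/
theorem hjb_subsolution_pointwise_lower_bound
    {n : ℕ} (Ω : Set (Fin n → ℝ)) (hΩ : IsCompact Ω)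
    (f : (Fin n → ℝ) → Fin n → ℝ) (q : (Fin n → ℝ) → ℝ)
    (Sig : (Fin n → ℝ) → Matrix (Fin n) (Fin n) ℝ)
    (hq : ∀ x ∈ Ω, 0 < q x)
    (hSig : ∀ x ∈ Ω, (Sig x).PosSemidef)
    (lam : ℝ) (hlam : 0 < lam)
    (Ψstar Ψl : (Fin n → ℝ) → ℝ)
    (hΨstar : ∃ U : Set (Fin n → ℝ), IsOpen U ∧ Ω ⊆ U ∧ ContDiffOn ℝ 2 Ψstar U)
    (hΨl : ∃ U : Set (Fin n → ℝ), IsOpen U ∧ Ω ⊆ U ∧ ContDiffOn ℝ 2 Ψl U)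
    (hpde : ∀ x ∈ interior Ω,
      (1 / lam) * q x * Ψstar x - hjbL f Sig Ψstar x = 0)
    (hsub : ∀ x ∈ interior Ω,
      (1 / lam) * q x * Ψl x - hjbL f Sig Ψl x ≤ 0)
    (hbdry : ∀ x ∈ frontier Ω, Ψl x ≤ Ψstar x) :
    ∀ x ∈ Ω, Ψl x ≤ Ψstar x := by
  obtain ⟨U, hU, hΩU, hΨstarU⟩ := hΨstar
  obtain ⟨V, hV, hΩV, hΨlV⟩ := hΨl
  have hΨstar_at : ∀ x ∈ Ω, ContDiffAt ℝ 2 Ψstar x := fun x hx =>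
    hΨstarU.contDiffAt (hU.mem_nhds (hΩU hx))
  have hΨl_at : ∀ x ∈ Ω, ContDiffAt ℝ 2 Ψl x := fun x hx =>
    hΨlV.contDiffAt (hV.mem_nhds (hΩV hx))
  refine fun x hx => sub_nonpos.mp (hΩ.forall_nonpos_of_isMaxOn_interior
    ((hΨlV.continuousOn.mono hΩV).sub (hΨstarU.continuousOn.mono hΩU))
    (fun y hy => sub_nonpos.mpr (hbdry y hy)) (fun y hy hmax => ?_) x hx)
  have hyΩ := interior_subset hy
  have hL := (hmax.isLocalMax (mem_interior_iff_mem_nhds.mp hy)).hjbL_nonpos f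
    (hSig y hyΩ) ((hΨl_at y hyΩ).sub (hΨstar_at y hyΩ))
  rw [hjbL_sub f Sig (hΨl_at y hyΩ) (hΨstar_at y hyΩ)] at hL
  have hcomparison : 1 / lam * q y * (Ψl - Ψstar) y ≤ 0 := by
    rw [Pi.sub_apply]
    linarith [hpde y hy, hsub y hy]
  exact nonpos_of_mul_nonpos_right hcomparison (by have := hq y hyΩ; positivity)
end

section
/- Let Ω be a set, λ > 0, and Ψ_l, Ψ* : Ω → ℝ with 0 < Ψ_l(x) ≤ Ψ*(x) and Ψ*(x) − Ψ_l(x) ≤ ε for all x ∈ Ω, where ε ≥ 0. Let M ≥ 0 satisfy |−λ log Ψ*(x)| ≤ M for all x ∈ Ω, set η = e^{−M/λ}, and assume ε < η. Define V_u = −λ log Ψ_l and V* = −λ log Ψ*. Then for all x ∈ Ω: 0 ≤ V_u(x) − V*(x) ≤ −λ log(1 − ε/η). (Theorem 6: the suboptimal value function V_u is an upper bound of the optimal cost V* with explicit pointwise error bound.) -/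
/-! The ratio `Ψl / Ψ*` lies in `[1 - ε/η, 1]`: it is at most one because `Ψl ≤ Ψ*`, and at
least `1 - ε/η` because the absolute gap `Ψ* - Ψl ≤ ε` becomes a relative gap of at most `ε/η`
once `Ψ* ≥ η`, which is what the bound `-λ log Ψ* ≤ M` says. Since
`V_u - V* = -λ log (Ψl / Ψ*)` and `-λ log` is antitone, both bounds follow. -/

open Real

lemma exp_neg_div_le_of_neg_mul_log_le {lam b M : ℝ} (hlam : 0 < lam) (hb : 0 < b)
    (h : -lam * log b ≤ M) : exp (-M / lam) ≤ b := by
  rw [← le_log_iff_exp_le hb, div_le_iff₀ hlam]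
  linarith

lemma one_sub_div_le_div_of_sub_le {a b ε η : ℝ} (hη : 0 < η) (hηb : η ≤ b) (hab : a ≤ b)
    (hgap : b - a ≤ ε) : 1 - ε / η ≤ a / b := by
  have hb : 0 < b := hη.trans_le hηb
  calc 1 - ε / η ≤ 1 - (b - a) / η := by gcongr
    _ ≤ 1 - (b - a) / b := by gcongr
    _ = a / b := by field_simp; ring

lemma neg_mul_log_sub_neg_mul_log {a b : ℝ} (lam : ℝ) (ha : a ≠ 0) (hb : b ≠ 0) :
    -lam * log a - -lam * log b = -lam * log (a / b) := by
  rw [log_div ha hb]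
  ring

theorem suboptimal_value_function_error_bound_general
    {Ω : Type*} (lam : ℝ) (hlam : 0 < lam)
    (ε : ℝ)
    (Ψl Ψstar : Ω → ℝ)
    (hpos : ∀ x, 0 < Ψl x)
    (hls : ∀ x, Ψl x ≤ Ψstar x)
    (hgap : ∀ x, Ψstar x - Ψl x ≤ ε)
    (M : ℝ)
    (hbound : ∀ x, |(-lam) * Real.log (Ψstar x)| ≤ M)
    (η : ℝ) (hη : η = Real.exp (-M / lam))
    (hεη : ε < η)
    (Vu Vstar : Ω → ℝ)
    (hVu : Vu = fun x => -lam * Real.log (Ψl x))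
    (hVstar : Vstar = fun x => -lam * Real.log (Ψstar x)) :
    ∀ x, 0 ≤ Vu x - Vstar x ∧ Vu x - Vstar x ≤ -lam * Real.log (1 - ε / η) := by
  intro x
  subst hVu hVstar
  have hηpos : 0 < η := hη ▸ exp_pos _
  have hΨstar : 0 < Ψstar x := (hpos x).trans_le (hls x)
  have hηle : η ≤ Ψstar x :=
    hη ▸ exp_neg_div_le_of_neg_mul_log_le hlam hΨstar (abs_le.mp (hbound x)).2
  have hratio : 1 - ε / η ≤ Ψl x / Ψstar x :=
    one_sub_div_le_div_of_sub_le hηpos hηle (hls x) (hgap x)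
  have hratio_pos : 0 < 1 - ε / η := sub_pos.2 ((div_lt_one hηpos).2 hεη)
  have hneg_lam : -lam ≤ 0 := neg_nonpos.2 hlam.le
  dsimp only
  rw [neg_mul_log_sub_neg_mul_log lam (hpos x).ne' hΨstar.ne']
  exact ⟨mul_nonneg_of_nonpos_of_nonpos hneg_lam
      (log_nonpos (div_nonneg (hpos x).le hΨstar.le) ((div_le_one hΨstar).2 (hls x))),
    mul_le_mul_of_nonpos_left (log_le_log hratio_pos hratio) hneg_lam⟩

/-- Theorem 6: the suboptimal value function `V_u = -λ log Ψ_l` is a pointwise upper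
bound of the optimal cost `V* = -λ log Ψ*` with explicit error bound
`-λ log(1 - ε/η)`, where `η = e^{-M/λ}` and `M` bounds `‖V*‖_∞`. -/
theorem suboptimal_value_function_error_bound
    {Ω : Type*} (lam : ℝ) (hlam : 0 < lam)
    (ε : ℝ) (hε : 0 ≤ ε)
    (Ψl Ψstar : Ω → ℝ)
    (hpos : ∀ x, 0 < Ψl x)
    (hls : ∀ x, Ψl x ≤ Ψstar x)
    (hgap : ∀ x, Ψstar x - Ψl x ≤ ε)
    (M : ℝ) (hM : 0 ≤ M)
    (hbound : ∀ x, |(-lam) * Real.log (Ψstar x)| ≤ M)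
    (η : ℝ) (hη : η = Real.exp (-M / lam))
    (hεη : ε < η)
    (Vu Vstar : Ω → ℝ)
    (hVu : Vu = fun x => -lam * Real.log (Ψl x))
    (hVstar : Vstar = fun x => -lam * Real.log (Ψstar x)) :
    ∀ x, 0 ≤ Vu x - Vstar x ∧ Vu x - Vstar x ≤ -lam * Real.log (1 - ε / η) :=
  suboptimal_value_function_error_bound_general lam hlam ε Ψl Ψstar hpos hls hgap M hbound η hη hεη
    Vu Vstar hVu hVstar
end

section
/- Let Ω be a set, λ > 0, and Ψ_l, Ψ* : Ω → ℝ with 0 < Ψ_l(x) ≤ Ψ*(x) and Ψ*(x) − Ψ_l(x) ≤ ε′ for all x ∈ Ω. Let M ≥ 0 satisfy |−λ log Ψ*(x)| ≤ M for all x ∈ Ω and set η = e^{−M/λ}. Suppose ε′ ≤ ε < η. Then for all x ∈ Ω: 0 ≤ (−λ log Ψ_l(x)) − (−λ log Ψ*(x)) ≤ −λ log(1 − ε/η). (Corollary 2: if the degree-(d+1) relaxation error ε′ = ε^{d+1} satisfies ε^{d+1} ≤ ε^{d} = ε, then the value-function error at degree d+1 is bounded by −λ log(1 − ε^{d}/η).)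 -/
/-!
Since `|λ log Ψ*| ≤ M`, the exact desirability is bounded below by `η = e^{-M/λ}`. Hence the
absolute gap `Ψ* - Ψ_l ≤ ε` is at most the relative gap `(ε/η) Ψ*`, i.e. `Ψ* (1 - ε/η) ≤ Ψ_l`,
and taking `-λ log` turns this multiplicative bound into the additive bound `-λ log (1 - ε/η)`.
-/

open Real

lemma exp_neg_div_le_of_abs_neg_mul_log_le {lam y M : ℝ} (hlam : 0 < lam) (hy : 0 < y)
    (h : |(-lam) * log y| ≤ M) : exp (-M / lam) ≤ y := by
  rw [← le_log_iff_exp_le hy, div_le_iff₀ hlam]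
  linarith [(abs_le.mp h).2, neg_mul lam (log y), mul_comm lam (log y)]

lemma mul_one_sub_div_le_of_sub_le {η s l ε : ℝ} (hη : 0 < η) (hηs : η ≤ s) (hε : 0 ≤ ε)
    (hgap : s - l ≤ ε) : s * (1 - ε / η) ≤ l := by
  have hε_le : ε ≤ ε / η * s := by
    calc ε = ε / η * η := (div_mul_cancel₀ ε hη.ne').symm
      _ ≤ ε / η * s := by gcongr
  linarith

lemma neg_mul_log_sub_neg_mul_log_mem_Icc {lam l s c : ℝ} (hlam : 0 ≤ lam) (hl : 0 < l)
    (hls : l ≤ s) (hc : 0 < c) (hscl : s * c ≤ l) :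
    (-lam * log l) - (-lam * log s) ∈ Set.Icc 0 (-lam * log c) := by
  have hs : 0 < s := hl.trans_le hls
  have hlog_le : log l ≤ log s := log_le_log hl hls
  have hlog_ge : log s + log c ≤ log l := by
    rw [← log_mul hs.ne' hc.ne']
    exact log_le_log (mul_pos hs hc) hscl
  constructor <;> nlinarith

theorem value_function_error_bound_nonincreasing_general
    {Ω : Type*} (lam : ℝ) (hlam : 0 < lam)
    (ε' ε : ℝ)
    (Ψl Ψstar : Ω → ℝ)
    (hpos : ∀ x, 0 < Ψl x)
    (hls : ∀ x, Ψl x ≤ Ψstar x)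
    (hgap : ∀ x, Ψstar x - Ψl x ≤ ε')
    (M : ℝ)
    (hbound : ∀ x, |(-lam) * Real.log (Ψstar x)| ≤ M)
    (η : ℝ) (hη : η = Real.exp (-M / lam))
    (hε'ε : ε' ≤ ε) (hεη : ε < η) :
    ∀ x, 0 ≤ (-lam * Real.log (Ψl x)) - (-lam * Real.log (Ψstar x)) ∧
      (-lam * Real.log (Ψl x)) - (-lam * Real.log (Ψstar x)) ≤
        -lam * Real.log (1 - ε / η) := by
  intro x
  have hstar_pos : 0 < Ψstar x := (hpos x).trans_le (hls x)
  have hη_pos : 0 < η := hη ▸ exp_pos _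
  have hη_le : η ≤ Ψstar x := hη ▸ exp_neg_div_le_of_abs_neg_mul_log_le hlam hstar_pos (hbound x)
  have hε_nonneg : 0 ≤ ε := by linarith [hgap x, hls x]
  have hfactor_pos : 0 < 1 - ε / η := sub_pos.mpr ((div_lt_one hη_pos).mpr hεη)
  exact neg_mul_log_sub_neg_mul_log_mem_Icc hlam.le (hpos x) (hls x) hfactor_pos
    (mul_one_sub_div_le_of_sub_le hη_pos hη_le hε_nonneg ((hgap x).trans hε'ε))

/-- Corollary 2: if the degree-(d+1) relaxation error `ε′` satisfies `ε′ ≤ ε < η`, then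
the value-function error at degree `d+1` is still bounded by `-λ log(1 - ε/η)`. -/
theorem value_function_error_bound_nonincreasing
    {Ω : Type*} (lam : ℝ) (hlam : 0 < lam)
    (ε' ε : ℝ)
    (Ψl Ψstar : Ω → ℝ)
    (hpos : ∀ x, 0 < Ψl x)
    (hls : ∀ x, Ψl x ≤ Ψstar x)
    (hgap : ∀ x, Ψstar x - Ψl x ≤ ε')
    (M : ℝ) (hM : 0 ≤ M)
    (hbound : ∀ x, |(-lam) * Real.log (Ψstar x)| ≤ M)
    (η : ℝ) (hη : η = Real.exp (-M / lam))
    (hε'ε : ε' ≤ ε) (hεη : ε < η) :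
    ∀ x, 0 ≤ (-lam * Real.log (Ψl x)) - (-lam * Real.log (Ψstar x)) ∧
      (-lam * Real.log (Ψl x)) - (-lam * Real.log (Ψstar x)) ≤
        -lam * Real.log (1 - ε / η) :=
  value_function_error_bound_nonincreasing_general lam hlam ε' ε Ψl Ψstar hpos hls hgap M hbound η
    hη hε'ε hεη
end

section
/- Let λ > 0, let x ∈ ℝⁿ, and let Ψ : ℝⁿ → ℝ be twice continuously differentiable and positive on a neighborhood of x. Let q ∈ ℝ, f ∈ ℝⁿ, G ∈ ℝ^{n×m}, B ∈ ℝ^{n×l}, let R ∈ ℝ^{m×m} be symmetric positive definite and Σ_ε ∈ ℝ^{l×l} symmetric positive semidefinite, and assume the linearly-solvable compatibility condition λ·G R⁻¹ Gᵀ = B Σ_ε Bᵀ =: Σ. If 0 = −(1/λ)·q·Ψ(x) + fᵀ∇Ψ(x) + (1/2)Tr(∇²Ψ(x)·Σ), then V = −λ log Ψ satisfies the nonlinear HJB equation at x: 0 = q + ∇V(x)ᵀf − (1/2)∇V(x)ᵀ G R⁻¹ Gᵀ ∇V(x) + (1/2)Tr(∇²V(x)·B Σ_ε Bᵀ). (The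 logarithmic transformation converts the linear PDE (10) into the nonlinear HJB PDE (6) under condition (7).) -/
/-!
With `c = -λ`, the chain rule gives `∇V = (c/Ψ) ∇Ψ` and
`∇²V = (c/Ψ) ∇²Ψ - (c/Ψ²) ∇Ψ ∇Ψᵀ`. Substituting, the two quadratic terms in `∇Ψ` cancel exactly
because `λ G R⁻¹ Gᵀ = B Σ_ε Bᵀ`, and what remains is `-λ/Ψ` times the linear equation.
-/

open Matrix

open Filter Topology

theorem trace_vecMulVec_mul {ι R : Type*} [Fintype ι] [CommSemiring R] (v : ι → R)
    (A : Matrix ι ι R) : (vecMulVec v v * A).trace = v ⬝ᵥ A *ᵥ v := by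
  rw [vecMulVec_mul, trace_vecMulVec, dotProduct_comm, dotProduct_mulVec]

theorem fderiv_const_mul_log {n : ℕ} {Ψ : (Fin n → ℝ) → ℝ} {y : Fin n → ℝ} (c : ℝ)
    (hΨ : DifferentiableAt ℝ Ψ y) (hy : Ψ y ≠ 0) :
    fderiv ℝ (fun z => c * Real.log (Ψ z)) y = (c / Ψ y) • fderiv ℝ Ψ y := by
  rw [((hΨ.hasFDerivAt.log hy).const_mul c).fderiv, smul_smul, div_eq_mul_inv]

theorem grad_const_mul_log {n : ℕ} {Ψ : (Fin n → ℝ) → ℝ} {x : Fin n → ℝ} (c : ℝ)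
    (hΨ : DifferentiableAt ℝ Ψ x) (hx : Ψ x ≠ 0) :
    grad (fun z => c * Real.log (Ψ z)) x = (c / Ψ x) • grad Ψ x := by
  ext i
  simp [grad, fderiv_const_mul_log c hΨ hx]

theorem hess_const_mul_log {n : ℕ} {Ψ : (Fin n → ℝ) → ℝ} {x : Fin n → ℝ} (c : ℝ)
    (hΨ : ContDiffAt ℝ 2 Ψ x) (hx : Ψ x ≠ 0) :
    hess (fun z => c * Real.log (Ψ z)) x
      = (c / Ψ x) • hess Ψ x - (c / Ψ x ^ 2) • vecMulVec (grad Ψ x) (grad Ψ x) := by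
  have hdiff : ∀ᶠ y in 𝓝 x, DifferentiableAt ℝ Ψ y :=
    (hΨ.eventually (by simp)).mono fun y hy => hy.differentiableAt (by norm_num)
  have hne : ∀ᶠ y in 𝓝 x, Ψ y ≠ 0 := hΨ.continuousAt.eventually_ne hx
  have hfderiv : DifferentiableAt ℝ (fderiv ℝ Ψ) x :=
    (hΨ.fderiv_right (m := 1) (by norm_num)).differentiableAt (by norm_num)
  have hinv : HasFDerivAt (fun y => (Ψ y)⁻¹) ((-(Ψ x ^ 2)⁻¹) • fderiv ℝ Ψ x) x :=
    (hasDerivAt_inv hx).comp_hasFDerivAt x hdiff.self_of_nhds.hasFDerivAt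
  ext i j
  have hpartial : HasFDerivAt (fun y => fderiv ℝ Ψ y (Pi.single j 1))
      (fderiv ℝ (fun y => fderiv ℝ Ψ y (Pi.single j 1)) x) x :=
    (hfderiv.clm_apply (differentiableAt_const _)).hasFDerivAt
  have hpartial_log : (fun y => fderiv ℝ (fun z => c * Real.log (Ψ z)) y (Pi.single j 1))
      =ᶠ[𝓝 x] fun y => c * ((Ψ y)⁻¹ * fderiv ℝ Ψ y (Pi.single j 1)) := by
    filter_upwards [hdiff, hne] with y hdy hny
    simp [fderiv_const_mul_log c hdy hny, div_eq_mul_inv, mul_assoc]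
  have hprod : HasFDerivAt (fun y => c * ((Ψ y)⁻¹ * fderiv ℝ Ψ y (Pi.single j 1))) _ x :=
    (hinv.mul hpartial).const_mul c
  rw [hess, of_apply, hpartial_log.fderiv_eq, hprod.fderiv]
  simp only [hess, grad, Matrix.sub_apply, Matrix.smul_apply, of_apply, vecMulVec_apply,
    smul_eq_mul, _root_.smul_apply, _root_.add_apply]
  field_simp
  ring

theorem log_transform_linear_to_nonlinear_hjb_general
    {n m l : ℕ} (lam : ℝ) (hlam : 0 < lam)
    (x : Fin n → ℝ) (Ψ : (Fin n → ℝ) → ℝ)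
    (U : Set (Fin n → ℝ)) (hU : IsOpen U) (hxU : x ∈ U)
    (hC2 : ContDiffOn ℝ 2 Ψ U) (hpos : ∀ y ∈ U, 0 < Ψ y)
    (q : ℝ) (f : Fin n → ℝ)
    (G : Matrix (Fin n) (Fin m) ℝ) (B : Matrix (Fin n) (Fin l) ℝ)
    (R : Matrix (Fin m) (Fin m) ℝ)
    (Se : Matrix (Fin l) (Fin l) ℝ)
    (Sig : Matrix (Fin n) (Fin n) ℝ)
    (hSig : Sig = B * Se * Bᵀ)
    (hcompat : lam • (G * R⁻¹ * Gᵀ) = B * Se * Bᵀ)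
    (hlin : 0 = -(1 / lam) * q * Ψ x + f ⬝ᵥ grad Ψ x
      + (1 / 2) * (hess Ψ x * Sig).trace)
    (V : (Fin n → ℝ) → ℝ) (hV : V = fun y => -lam * Real.log (Ψ y)) :
    0 = q + grad V x ⬝ᵥ f
      - (1 / 2) * (grad V x ⬝ᵥ (G * R⁻¹ * Gᵀ).mulVec (grad V x))
      + (1 / 2) * (hess V x * (B * Se * Bᵀ)).trace := by
  subst hV hSig
  have hΨ : ContDiffAt ℝ 2 Ψ x := hC2.contDiffAt (hU.mem_nhds hxU)
  have hx : Ψ x ≠ 0 := (hpos x hxU).ne'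
  have hquad : grad Ψ x ⬝ᵥ (B * Se * Bᵀ) *ᵥ grad Ψ x
      = lam * (grad Ψ x ⬝ᵥ (G * R⁻¹ * Gᵀ) *ᵥ grad Ψ x) := by
    rw [← hcompat, smul_mulVec, dotProduct_smul, smul_eq_mul]
  rw [grad_const_mul_log _ (hΨ.differentiableAt (by norm_num)) hx, hess_const_mul_log _ hΨ hx,
    sub_mul, trace_sub, smul_mul, smul_mul, trace_smul, trace_smul, trace_vecMulVec_mul, hquad]
  rw [dotProduct_comm] at hlin
  simp only [smul_dotProduct, mulVec_smul, dotProduct_smul, smul_eq_mul]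
  linear_combination (norm := skip) (-(lam / Ψ x)) * hlin
  field_simp
  ring

/-- The logarithmic transformation `V = -λ log Ψ` converts the linear HJB PDE into the
nonlinear HJB PDE under the linearly-solvable condition `λ G R⁻¹ Gᵀ = B Σ_ε Bᵀ`. -/
theorem log_transform_linear_to_nonlinear_hjb
    {n m l : ℕ} (lam : ℝ) (hlam : 0 < lam)
    (x : Fin n → ℝ) (Ψ : (Fin n → ℝ) → ℝ)
    (U : Set (Fin n → ℝ)) (hU : IsOpen U) (hxU : x ∈ U)
    (hC2 : ContDiffOn ℝ 2 Ψ U) (hpos : ∀ y ∈ U, 0 < Ψ y)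
    (q : ℝ) (f : Fin n → ℝ)
    (G : Matrix (Fin n) (Fin m) ℝ) (B : Matrix (Fin n) (Fin l) ℝ)
    (R : Matrix (Fin m) (Fin m) ℝ) (hR : R.PosDef)
    (Se : Matrix (Fin l) (Fin l) ℝ) (hSe : Se.PosSemidef)
    (Sig : Matrix (Fin n) (Fin n) ℝ)
    (hSig : Sig = B * Se * Bᵀ)
    (hcompat : lam • (G * R⁻¹ * Gᵀ) = B * Se * Bᵀ)
    (hlin : 0 = -(1 / lam) * q * Ψ x + f ⬝ᵥ grad Ψ x
      + (1 / 2) * (hess Ψ x * Sig).trace)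
    (V : (Fin n → ℝ) → ℝ) (hV : V = fun y => -lam * Real.log (Ψ y)) :
    0 = q + grad V x ⬝ᵥ f
      - (1 / 2) * (grad V x ⬝ᵥ (G * R⁻¹ * Gᵀ).mulVec (grad V x))
      + (1 / 2) * (hess V x * (B * Se * Bᵀ)).trace :=
  log_transform_linear_to_nonlinear_hjb_general lam hlam x Ψ U hU hxU hC2 hpos q f G B R Se Sig hSig
    hcompat hlin V hV
end

section
/- Let λ > 0, let x ∈ ℝⁿ, and let Ψ : ℝⁿ → ℝ be twice continuously differentiable and positive on a neighborhood of x. Let q ≥ 0 be a real number, f ∈ ℝⁿ, G ∈ ℝ^{n×m}, B ∈ ℝ^{n×l}, let R ∈ ℝ^{m×m} be symmetric positive definite and Σ_ε ∈ ℝ^{l×l} symmetric positive semidefinite, and assume λ·G R⁻¹ Gᵀ = B Σ_ε Bᵀ =: Σ. Suppose (1/λ)·q·Ψ(x) − fᵀ∇Ψ(x) − (1/2)Tr(∇²Ψ(x)·Σ) ≤ 0. Define V = −λ log Ψ and u = −R⁻¹Gᵀ∇V(x). Then (λ/(2Ψ(x)²))·∇Ψ(x)ᵀ Σ ∇Ψ(x)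 = (1/2)∇V(x)ᵀ G R⁻¹ Gᵀ ∇V(x) = (1/2)uᵀRu, and consequently ∇V(x)ᵀ(f + Gu) + (1/2)Tr(∇²V(x)·B Σ_ε Bᵀ) ≤ −q − (1/2)uᵀRu. (Key inequality in the proof of Theorem 8 bounding the generator of V_u by minus the running cost q + (1/2)uᵀRu.) -/
/-!
Write `c = Ψ x` and `g = ∇Ψ(x)`. The chain rule for `V = -λ log Ψ` gives `∇V = -(λ/c) g` and
`∇²V = -(λ/c) ∇²Ψ + (λ/c²) g gᵀ`. Since `u = -R⁻¹Gᵀ∇V`, the energy `uᵀRu` is the quadratic form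
of `G R⁻¹ Gᵀ` at `∇V`, and the compatibility condition `Σ = λ G R⁻¹ Gᵀ` turns it into
`(λ/c²) gᵀΣg`. Substituting, the generator becomes `-(λ/c)(fᵀg + ½ Tr(∇²Ψ Σ)) - ½ uᵀRu`, and the
hypothesis on `Ψ`, multiplied by `λ/c > 0`, bounds the first term by `-q`.
-/

open Matrix

open Topology

section ChainRule

variable {n : ℕ} {φ φ' : ℝ → ℝ} {Ψ : (Fin n → ℝ) → ℝ} {x : Fin n → ℝ}

theorem grad_comp {d : ℝ} (hφ : HasDerivAt φ d (Ψ x)) (hΨ : DifferentiableAt ℝ Ψ x) :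
    grad (φ ∘ Ψ) x = d • grad Ψ x := by
  funext i
  simp [grad, (hφ.comp_hasFDerivAt x hΨ.hasFDerivAt).fderiv]

theorem hess_comp {φ'' : ℝ} (hφ : ∀ᶠ t in 𝓝 (Ψ x), HasDerivAt φ (φ' t) t)
    (hφ' : HasDerivAt φ' φ'' (Ψ x)) (hΨ : ContDiffAt ℝ 2 Ψ x) :
    hess (φ ∘ Ψ) x = φ' (Ψ x) • hess Ψ x + φ'' • vecMulVec (grad Ψ x) (grad Ψ x) := by
  have hΨx : DifferentiableAt ℝ Ψ x := hΨ.differentiableAt (by norm_num)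
  have hDΨ : DifferentiableAt ℝ (fderiv ℝ Ψ) x :=
    (hΨ.fderiv_right (m := 1) (by norm_num)).differentiableAt one_ne_zero
  have hfderiv : ∀ᶠ y in 𝓝 x, fderiv ℝ (φ ∘ Ψ) y = φ' (Ψ y) • fderiv ℝ Ψ y := by
    filter_upwards [hΨx.continuousAt.eventually hφ,
      (hΨ.eventually (by simp)).mono fun y hy => hy.differentiableAt (by norm_num)]
      with y hφy hΨy
    exact (hφy.comp_hasFDerivAt y hΨy.hasFDerivAt).fderiv
  ext i j
  have hpartial : HasFDerivAt (fun y => fderiv ℝ Ψ y (Pi.single j 1))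
      (fderiv ℝ (fun y => fderiv ℝ Ψ y (Pi.single j 1)) x) x :=
    (hDΨ.clm_apply (differentiableAt_const _)).hasFDerivAt
  have hprod := (hφ'.comp_hasFDerivAt x hΨx.hasFDerivAt).mul hpartial
  have heq : (fun y => fderiv ℝ (φ ∘ Ψ) y (Pi.single j 1))
      =ᶠ[𝓝 x] (φ' ∘ Ψ) * fun y => fderiv ℝ Ψ y (Pi.single j 1) :=
    hfderiv.mono fun y hy => by simp [hy]
  rw [hess, of_apply, heq.fderiv_eq, hprod.fderiv]
  simp only [_root_.add_apply, _root_.smul_apply, smul_eq_mul, Matrix.add_apply,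
    Matrix.smul_apply, hess, of_apply, vecMulVec_apply, grad, Function.comp_apply]
  ring

end ChainRule

/-- Also true for singular `R`, where the junk value `R⁻¹ = 0` makes both sides vanish. -/
theorem dotProduct_mulVec_nonsing_inv {m α : Type*} [Fintype m] [DecidableEq m] [CommRing α]
    (R : Matrix m m α) (v : m → α) :
    R⁻¹ *ᵥ v ⬝ᵥ R *ᵥ (R⁻¹ *ᵥ v) = v ⬝ᵥ R⁻¹ *ᵥ v := by
  by_cases hR : IsUnit R.det
  · rw [mulVec_mulVec, mul_nonsing_inv R hR, one_mulVec, dotProduct_comm]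
  · simp [nonsing_inv_apply_not_isUnit R hR]

theorem dotProduct_mulVec_nonsing_inv_mul_transpose {n m α : Type*} [Fintype n] [Fintype m]
    [DecidableEq m] [CommRing α] (R : Matrix m m α) (G : Matrix n m α) (w : n → α) :
    (R⁻¹ * Gᵀ) *ᵥ w ⬝ᵥ R *ᵥ ((R⁻¹ * Gᵀ) *ᵥ w) = w ⬝ᵥ (G * R⁻¹ * Gᵀ) *ᵥ w := by
  rw [← mulVec_mulVec, dotProduct_mulVec_nonsing_inv, mulVec_transpose, ← dotProduct_mulVec,
    mulVec_mulVec, ← mulVec_transpose, mulVec_mulVec]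

theorem trace_vecMulVec_self_mul {n α : Type*} [Fintype n] [CommRing α] (g : n → α)
    (S : Matrix n n α) : (vecMulVec g g * S).trace = g ⬝ᵥ S *ᵥ g := by
  rw [vecMulVec_mul, trace_vecMulVec, dotProduct_comm, dotProduct_mulVec]

section LogTransform

variable {n : ℕ} {Ψ : (Fin n → ℝ) → ℝ} {x : Fin n → ℝ}

theorem grad_neg_mul_log (lam : ℝ) (hΨ : DifferentiableAt ℝ Ψ x) (hΨx : Ψ x ≠ 0) :
    grad (fun y => -lam * Real.log (Ψ y)) x = (-lam / Ψ x) • grad Ψ x :=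
  grad_comp (φ := fun t => -lam * Real.log t) ((Real.hasDerivAt_log hΨx).const_mul (-lam)) hΨ

theorem hess_neg_mul_log (lam : ℝ) (hΨ : ContDiffAt ℝ 2 Ψ x) (hΨx : Ψ x ≠ 0) :
    hess (fun y => -lam * Real.log (Ψ y)) x
      = (-lam / Ψ x) • hess Ψ x + (lam / Ψ x ^ 2) • vecMulVec (grad Ψ x) (grad Ψ x) := by
  have hlog : ∀ᶠ t in 𝓝 (Ψ x), HasDerivAt (fun t => -lam * Real.log t) (-lam * t⁻¹) t :=
    (eventually_ne_nhds hΨx).mono fun t ht => (Real.hasDerivAt_log ht).const_mul (-lam)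
  refine (hess_comp (φ := fun t => -lam * Real.log t) hlog
    ((hasDerivAt_inv hΨx).const_mul (-lam)) hΨ).trans ?_
  congr 2
  ring

end LogTransform

theorem generator_bounded_by_running_cost_general
    {n m l : ℕ} (lam : ℝ) (hlam : 0 < lam)
    (x : Fin n → ℝ) (Ψ : (Fin n → ℝ) → ℝ)
    (U : Set (Fin n → ℝ)) (hU : IsOpen U) (hxU : x ∈ U)
    (hC2 : ContDiffOn ℝ 2 Ψ U) (hpos : ∀ y ∈ U, 0 < Ψ y)
    (q : ℝ) (f : Fin n → ℝ)
    (G : Matrix (Fin n) (Fin m) ℝ) (B : Matrix (Fin n) (Fin l) ℝ)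
    (R : Matrix (Fin m) (Fin m) ℝ)
    (Se : Matrix (Fin l) (Fin l) ℝ)
    (Sig : Matrix (Fin n) (Fin n) ℝ)
    (hSig : Sig = B * Se * Bᵀ)
    (hcompat : lam • (G * R⁻¹ * Gᵀ) = B * Se * Bᵀ)
    (hrelax : (1 / lam) * q * Ψ x - f ⬝ᵥ grad Ψ x
      - (1 / 2) * (hess Ψ x * Sig).trace ≤ 0)
    (V : (Fin n → ℝ) → ℝ) (hV : V = fun y => -lam * Real.log (Ψ y))
    (u : Fin m → ℝ) (hu : u = -((R⁻¹ * Gᵀ).mulVec (grad V x))) :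
    ((lam / (2 * Ψ x ^ 2)) * (grad Ψ x ⬝ᵥ Sig.mulVec (grad Ψ x))
        = (1 / 2) * (grad V x ⬝ᵥ (G * R⁻¹ * Gᵀ).mulVec (grad V x)) ∧
      (1 / 2) * (grad V x ⬝ᵥ (G * R⁻¹ * Gᵀ).mulVec (grad V x))
        = (1 / 2) * (u ⬝ᵥ R.mulVec u)) ∧
    grad V x ⬝ᵥ (f + G.mulVec u)
        + (1 / 2) * (hess V x * (B * Se * Bᵀ)).trace ≤
      -q - (1 / 2) * (u ⬝ᵥ R.mulVec u) := by
  have hc : 0 < Ψ x := hpos x hxU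
  have hΨ : ContDiffAt ℝ 2 Ψ x := hC2.contDiffAt (hU.mem_nhds hxU)
  have hgrad : grad V x = (-lam / Ψ x) • grad Ψ x :=
    hV ▸ grad_neg_mul_log lam (hΨ.differentiableAt (by norm_num)) hc.ne'
  have hhess : hess V x = (-lam / Ψ x) • hess Ψ x
      + (lam / Ψ x ^ 2) • vecMulVec (grad Ψ x) (grad Ψ x) :=
    hV ▸ hess_neg_mul_log lam hΨ hc.ne'
  have hquad : grad V x ⬝ᵥ (G * R⁻¹ * Gᵀ) *ᵥ grad V x
      = lam / Ψ x ^ 2 * (grad Ψ x ⬝ᵥ Sig *ᵥ grad Ψ x) := by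
    rw [hgrad, hSig, ← hcompat]
    simp only [mulVec_smul, smul_mulVec, dotProduct_smul, smul_dotProduct, smul_eq_mul]
    field_simp
  have henergy : u ⬝ᵥ R *ᵥ u = grad V x ⬝ᵥ (G * R⁻¹ * Gᵀ) *ᵥ grad V x := by
    rw [hu, neg_dotProduct, mulVec_neg, dotProduct_neg, neg_neg,
      dotProduct_mulVec_nonsing_inv_mul_transpose]
  have hGu : G *ᵥ u = -((G * R⁻¹ * Gᵀ) *ᵥ grad V x) := by
    rw [hu, mulVec_neg, mulVec_mulVec, Matrix.mul_assoc]
  have hscaled : q ≤ lam / Ψ x * (f ⬝ᵥ grad Ψ x + 1 / 2 * (hess Ψ x * Sig).trace) := by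
    rw [div_mul_eq_mul_div, le_div_iff₀ hc, ← div_le_iff₀' hlam]
    linear_combination hrelax
  refine ⟨⟨by rw [hquad]; ring, by rw [henergy]⟩, ?_⟩
  rw [← hSig, hhess, dotProduct_add, hGu, dotProduct_neg, henergy, hquad, hgrad, add_mul,
    trace_add, smul_mul, smul_mul, trace_smul, trace_smul, trace_vecMulVec_self_mul,
    smul_dotProduct, smul_eq_mul, smul_eq_mul, smul_eq_mul, dotProduct_comm _ f]
  linear_combination hscaled

/-- Key inequality in the proof of Theorem 8: the quadratic term equals half the control
energy `(1/2)uᵀRu`, so the generator of `V` along the controlled dynamics is bounded by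
minus the running cost `q + (1/2)uᵀRu`. -/
theorem generator_bounded_by_running_cost
    {n m l : ℕ} (lam : ℝ) (hlam : 0 < lam)
    (x : Fin n → ℝ) (Ψ : (Fin n → ℝ) → ℝ)
    (U : Set (Fin n → ℝ)) (hU : IsOpen U) (hxU : x ∈ U)
    (hC2 : ContDiffOn ℝ 2 Ψ U) (hpos : ∀ y ∈ U, 0 < Ψ y)
    (q : ℝ) (hq : 0 ≤ q) (f : Fin n → ℝ)
    (G : Matrix (Fin n) (Fin m) ℝ) (B : Matrix (Fin n) (Fin l) ℝ)
    (R : Matrix (Fin m) (Fin m) ℝ) (hR : R.PosDef)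
    (Se : Matrix (Fin l) (Fin l) ℝ) (hSe : Se.PosSemidef)
    (Sig : Matrix (Fin n) (Fin n) ℝ)
    (hSig : Sig = B * Se * Bᵀ)
    (hcompat : lam • (G * R⁻¹ * Gᵀ) = B * Se * Bᵀ)
    (hrelax : (1 / lam) * q * Ψ x - f ⬝ᵥ grad Ψ x
      - (1 / 2) * (hess Ψ x * Sig).trace ≤ 0)
    (V : (Fin n → ℝ) → ℝ) (hV : V = fun y => -lam * Real.log (Ψ y))
    (u : Fin m → ℝ) (hu : u = -((R⁻¹ * Gᵀ).mulVec (grad V x))) :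
    ((lam / (2 * Ψ x ^ 2)) * (grad Ψ x ⬝ᵥ Sig.mulVec (grad Ψ x))
        = (1 / 2) * (grad V x ⬝ᵥ (G * R⁻¹ * Gᵀ).mulVec (grad V x)) ∧
      (1 / 2) * (grad V x ⬝ᵥ (G * R⁻¹ * Gᵀ).mulVec (grad V x))
        = (1 / 2) * (u ⬝ᵥ R.mulVec u)) ∧
    grad V x ⬝ᵥ (f + G.mulVec u)
        + (1 / 2) * (hess V x * (B * Se * Bᵀ)).trace ≤
      -q - (1 / 2) * (u ⬝ᵥ R.mulVec u) :=
  generator_bounded_by_running_cost_general lam hlam x Ψ U hU hxU hC2 hpos q f G B R Se Sig hSig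
    hcompat hrelax V hV u hu
end

section
/- Let p ∈ ℝⁿ and let H ∈ ℝ^{n×n} be a symmetric matrix (playing the roles of the gradient ∇V(x) and Hessian ∇²V(x) of a value function V at a point x). Let q > 0 be a real number, f ∈ ℝⁿ, G ∈ ℝ^{n×m}, B ∈ ℝ^{n×l}, let R ∈ ℝ^{m×m} be symmetric positive definite and Σ_ε ∈ ℝ^{l×l} symmetric positive semidefinite. Suppose the supersolution inequality q + pᵀf − (1/2)pᵀ G R⁻¹ Gᵀ p + (1/2)Tr(H·B Σ_ε Bᵀ) ≤ 0 holds, and suppose Tr(H·B Σ_ε Bᵀ) ≥ 0. Then with u = −R⁻¹Gᵀp, one has pᵀ(f + Gu) ≤ −q < 0. (Key inequality in the proof of Corollary 6: under the trace condition, the stochastic HJB relaxation yields a control Lyapunov function decrease condition for the deterministic system dx = (f + Gu)dt.) -/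
open Matrix

/-
With the feedback `u = -R⁻¹Gᵀp` the closed-loop derivative is `pᵀf - pᵀGR⁻¹Gᵀp`, and the
quadratic form `pᵀGR⁻¹Gᵀp` is nonnegative because `R⁻¹` is positive definite. Dropping the
nonnegative trace term from the supersolution inequality gives `q + pᵀf ≤ (1/2) pᵀGR⁻¹Gᵀp`,
hence `pᵀf - pᵀGR⁻¹Gᵀp ≤ -q - (1/2) pᵀGR⁻¹Gᵀp ≤ -q`.
-/

theorem Matrix.dotProduct_add_mulVec_neg_mulVec {ι κ α : Type*} [Fintype ι] [Fintype κ]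
    [CommRing α] (p f : ι → α) (G : Matrix ι κ α) (K : Matrix κ ι α) :
    p ⬝ᵥ (f + G *ᵥ -(K *ᵥ p)) = p ⬝ᵥ f - p ⬝ᵥ (G * K) *ᵥ p := by
  rw [dotProduct_add, mulVec_neg, mulVec_mulVec, dotProduct_neg, sub_eq_add_neg]

theorem Matrix.PosSemidef.dotProduct_mul_mul_transpose_mulVec_nonneg {ι κ : Type*} [Fintype ι]
    [Fintype κ] {R : Matrix κ κ ℝ} (hR : R.PosSemidef) (G : Matrix ι κ ℝ) (p : ι → ℝ) :
    0 ≤ p ⬝ᵥ (G * R * Gᵀ) *ᵥ p := by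
  simpa [conjTranspose_eq_transpose_of_trivial] using
    (hR.mul_mul_conjTranspose_same G).dotProduct_mulVec_nonneg p

theorem deterministic_lyapunov_decrease_from_stochastic_hjb_general
    {n m l : ℕ} (p : Fin n → ℝ)
    (H : Matrix (Fin n) (Fin n) ℝ)
    (q : ℝ) (hq : 0 < q) (f : Fin n → ℝ)
    (G : Matrix (Fin n) (Fin m) ℝ) (B : Matrix (Fin n) (Fin l) ℝ)
    (R : Matrix (Fin m) (Fin m) ℝ) (hR : R.PosDef)
    (Se : Matrix (Fin l) (Fin l) ℝ)
    (hsuper : q + p ⬝ᵥ f - (1 / 2) * (p ⬝ᵥ (G * R⁻¹ * Gᵀ).mulVec p)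
      + (1 / 2) * (H * (B * Se * Bᵀ)).trace ≤ 0)
    (htrace : 0 ≤ (H * (B * Se * Bᵀ)).trace)
    (u : Fin m → ℝ) (hu : u = -((R⁻¹ * Gᵀ).mulVec p)) :
    p ⬝ᵥ (f + G.mulVec u) ≤ -q ∧ -q < 0 := by
  have hclosed : p ⬝ᵥ (f + G *ᵥ u) = p ⬝ᵥ f - p ⬝ᵥ (G * R⁻¹ * Gᵀ) *ᵥ p := by
    rw [hu, dotProduct_add_mulVec_neg_mulVec, Matrix.mul_assoc]
  have hquad : 0 ≤ p ⬝ᵥ (G * R⁻¹ * Gᵀ) *ᵥ p :=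
    hR.posSemidef.inv.dotProduct_mul_mul_transpose_mulVec_nonneg G p
  exact ⟨by linarith, by linarith⟩

/-- Key inequality in the proof of Corollary 6: if the supersolution inequality of the
stochastic HJB holds at a point and the trace term is nonnegative, then the control
`u = -R⁻¹Gᵀp` yields the strict Lyapunov decrease `pᵀ(f + Gu) ≤ -q < 0` for the
deterministic system. -/
theorem deterministic_lyapunov_decrease_from_stochastic_hjb
    {n m l : ℕ} (p : Fin n → ℝ)
    (H : Matrix (Fin n) (Fin n) ℝ) (hH : H.IsSymm)
    (q : ℝ) (hq : 0 < q) (f : Fin n → ℝ)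
    (G : Matrix (Fin n) (Fin m) ℝ) (B : Matrix (Fin n) (Fin l) ℝ)
    (R : Matrix (Fin m) (Fin m) ℝ) (hR : R.PosDef)
    (Se : Matrix (Fin l) (Fin l) ℝ) (hSe : Se.PosSemidef)
    (hsuper : q + p ⬝ᵥ f - (1 / 2) * (p ⬝ᵥ (G * R⁻¹ * Gᵀ).mulVec p)
      + (1 / 2) * (H * (B * Se * Bᵀ)).trace ≤ 0)
    (htrace : 0 ≤ (H * (B * Se * Bᵀ)).trace)
    (u : Fin m → ℝ) (hu : u = -((R⁻¹ * Gᵀ).mulVec p)) :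
    p ⬝ᵥ (f + G.mulVec u) ≤ -q ∧ -q < 0 :=
  deterministic_lyapunov_decrease_from_stochastic_hjb_general p H q hq f G B R hR Se hsuper htrace u
    hu
end
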